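/- arXiv:2209.15254 — 2 statements merged into one kernel-verified Lean document; each statement's English description precedes it below -/
import Mathlib

section
/- Let (W,S) be a Coxeter system with finite hypergraph index h ≥ 1. Then there exists a proper subset T ⊊ S such that the subsystem (W_T, T) has hypergraph index exactly h − 1. Consequently, there exists a nested chain S ⊋ T₁ ⊋ T₂ ⊋ ⋯ ⊋ T_h with h(W_{T_i}, T_i) = h − i for each i. -/
open scoped Classical in
noncomputable section

variable {B W : Type*} [Group W] {M : CoxeterMatrix B}

/-- The special (standard parabolic) subgroup of `W` generated by the simple
reflections indexed by `T`. -/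
def CoxeterSystem.specialSubgroup (cs : CoxeterSystem M W) (T : Set B) : Subgroup W :=
  Subgroup.closure (cs.simple '' T)

/-- `T` is spherical if the special subgroup `W_T` is finite. -/
def CoxeterSystem.IsSpherical (cs : CoxeterSystem M W) (T : Set B) : Prop :=
  Finite (cs.specialSubgroup T)

/-- Two subsets of the generating set commute if each pair of simple reflections,
one from each, commutes in `W`. -/
def CoxeterSystem.SetsCommute (cs : CoxeterSystem M W) (A K : Set B) : Prop :=
  ∀ a ∈ A, ∀ k ∈ K, Commute (cs.simple a) (cs.simple k)

/-- `A` is minimal nonspherical: nonspherical, but every proper subset is spherical. -/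
def CoxeterSystem.MinimalNonspherical (cs : CoxeterSystem M W) (A : Set B) : Prop :=
  ¬ cs.IsSpherical A ∧ ∀ C ⊂ A, cs.IsSpherical C

/-- A subset `T` is irreducible if it admits no nontrivial partition into two
disjoint commuting subsets. -/
def CoxeterSystem.IsIrreducibleSubset (cs : CoxeterSystem M W) (T : Set B) : Prop :=
  ∀ A K : Set B, A ∪ K = T → Disjoint A K → cs.SetsCommute A K → A = ∅ ∨ K = ∅

/-- A subset `T` is affine-type if `W_T` is infinite and virtually abelian. -/
def CoxeterSystem.IsAffineSubset (cs : CoxeterSystem M W) (T : Set B) : Prop :=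
  ¬ cs.IsSpherical T ∧ ∃ A : Subgroup W, A ≤ cs.specialSubgroup T ∧
    (∀ x ∈ A, ∀ y ∈ A, Commute x y) ∧ A.relIndex (cs.specialSubgroup T) ≠ 0

/-- `T` is irreducible affine of rank at least `3`. -/
def CoxeterSystem.IsIrredAffineRankGE3 (cs : CoxeterSystem M W) (T : Set B) : Prop :=
  cs.IsIrreducibleSubset T ∧ cs.IsAffineSubset T ∧ 3 ≤ T.ncard

/-- The defining condition for wide subsets of the ambient subset `SS`:
`T = A × B` with `A`, `B` both nonspherical, or `A` irreducible affine of
rank `≥ 3` and `B` spherical (possibly empty). -/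
def CoxeterSystem.IsWidePre (cs : CoxeterSystem M W) (SS T : Set B) : Prop :=
  T ⊆ SS ∧ ∃ A K : Set B, T = A ∪ K ∧ Disjoint A K ∧ cs.SetsCommute A K ∧
    ((¬ cs.IsSpherical A ∧ ¬ cs.IsSpherical K) ∨
      (cs.IsIrredAffineRankGE3 A ∧ cs.IsSpherical K))

/-- The set `Ω(SS)` of wide subsets: the maximal elements of the collection above. -/
def CoxeterSystem.wide (cs : CoxeterSystem M W) (SS : Set B) : Set (Set B) :=
  {T | cs.IsWidePre SS T ∧ ∀ T', cs.IsWidePre SS T' → T ⊆ T' → T = T'}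

/-- The defining condition for slab subsets: `T = A × K` with `A` minimal
nonspherical, `K` nonempty spherical commuting with `A`, and `T` contained in no
wide subset. -/
def CoxeterSystem.IsSlabPre (cs : CoxeterSystem M W) (SS T : Set B) : Prop :=
  T ⊆ SS ∧ ∃ A K : Set B, T = A ∪ K ∧ Disjoint A K ∧ cs.SetsCommute A K ∧
    cs.MinimalNonspherical A ∧ K.Nonempty ∧ cs.IsSpherical K ∧
    ¬ ∃ T' ∈ cs.wide SS, T ⊆ T'

/-- The set `Ψ(SS)` of slab subsets: the maximal elements of the collection above. -/
def CoxeterSystem.slab (cs : CoxeterSystem M W) (SS : Set B) : Set (Set B) :=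
  {T | cs.IsSlabPre SS T ∧ ∀ T', cs.IsSlabPre SS T' → T ⊆ T' → T = T'}

/-- One step of the relation generating `≡ᵢ`: both sets belong to the given
collection and their intersection is nonspherical. -/
def CoxeterSystem.lambdaRel (cs : CoxeterSystem M W) (L : Set (Set B)) (T T' : Set B) : Prop :=
  T ∈ L ∧ T' ∈ L ∧ ¬ cs.IsSpherical (T ∩ T')

/-- The sets `Λᵢ(SS)` of the hypergraph index construction: `Λ₀ = Ω ∪ Ψ`, and
`Λᵢ₊₁` consists of the unions of the `≡ᵢ`-equivalence classes of `Λᵢ`. -/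
def CoxeterSystem.lambdaSet (cs : CoxeterSystem M W) (SS : Set B) : ℕ → Set (Set B)
  | 0 => cs.wide SS ∪ cs.slab SS
  | (i+1) => {U | ∃ T ∈ cs.lambdaSet SS i,
      U = ⋃₀ {T' | T' ∈ cs.lambdaSet SS i ∧
        Relation.EqvGen (cs.lambdaRel (cs.lambdaSet SS i)) T T'}}

/-- The hypergraph index of the subsystem on `SS`: the least `h` with
`SS ∈ Λ_h(SS)`, or `∞` if there is no such `h` or if `Ω(SS) = ∅`. -/
noncomputable def CoxeterSystem.hypergraphIndex (cs : CoxeterSystem M W) (SS : Set B) : ℕ∞ :=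
  if cs.wide SS = ∅ then ⊤
  else sInf {n : ℕ∞ | ∃ h : ℕ, n = (h : ℕ∞) ∧ SS ∈ cs.lambdaSet SS h}

/-! If `h(S) = k + 1` with `k ≥ 1`, then `S` is the union of an `≡ₖ`-class of `Λₖ(S)`, and
some member `T` of that class lies in no member of `Λₖ₋₁(S)`: otherwise the enlarged members
would lie in one `≡ₖ₋₁`-class whose union is `S`, putting `S` in `Λₖ(S)`. Restriction puts `T`
in `Λₖ(T)`, while monotonicity (every member of `Λⱼ(T)` lies in a member of `Λⱼ(S)`) rules out
`T ∈ Λⱼ(T)` for `j < k`; and `Ω(T) ≠ ∅`, since a member of some `Λᵢ` containing no wide subset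
is a slab. For `k = 0` any wide subset `T ⊊ S` has `h(T) = 0`. Iterating the step gives the
chain. -/

theorem Relation.EqvGen.map_of_component {α β : Type*} {r : α → α → Prop}
    {r' : β → β → Prop} (f : α → β) {a b : α} (hab : Relation.EqvGen r a b)
    (hf : ∀ x y, Relation.EqvGen r a x → r x y → r' (f x) (f y)) :
    Relation.EqvGen r' (f a) (f b) := by
  suffices ∀ x y, Relation.EqvGen r x y → Relation.EqvGen r a x →
      Relation.EqvGen r' (f x) (f y) from this a b hab (.refl a)
  intro x y hxy
  induction hxy with
  | rel x y h => exact fun hx => .rel _ _ (hf x y hx h)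
  | refl x => exact fun _ => .refl _
  | symm x y hxy ih => exact fun hy => .symm _ _ (ih (.trans _ _ _ hy (.symm _ _ hxy)))
  | trans x y z hxy _ ihxy ihyz =>
    exact fun hx => .trans _ _ _ (ihxy hx) (ihyz (.trans _ _ _ hx hxy))

namespace CoxeterSystem

def lambdaClass (cs : CoxeterSystem M W) (L : Set (Set B)) (T : Set B) : Set B :=
  ⋃₀ {T' | T' ∈ L ∧ Relation.EqvGen (cs.lambdaRel L) T T'}

variable {cs : CoxeterSystem M W}

theorem IsSpherical.mono {T T' : Set B} (h : cs.IsSpherical T') (hsub : T ⊆ T') :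
    cs.IsSpherical T :=
  have hle : cs.specialSubgroup T ≤ cs.specialSubgroup T' :=
    Subgroup.closure_mono (Set.image_mono hsub)
  @Finite.of_injective _ _ h _ (Subgroup.inclusion_injective hle)

theorem not_isSpherical_mono {T T' : Set B} (h : ¬ cs.IsSpherical T) (hsub : T ⊆ T') :
    ¬ cs.IsSpherical T' :=
  fun h' => h (h'.mono hsub)

theorem SetsCommute.mono {A K A' K' : Set B} (h : cs.SetsCommute A K) (hA : A' ⊆ A)
    (hK : K' ⊆ K) : cs.SetsCommute A' K' :=
  fun a ha k hk => h a (hA ha) k (hK hk)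

/-- `W_{A ∪ K}` is the image of `W_A × W_K` under multiplication. -/
theorem IsSpherical.union {A K : Set B} (hA : cs.IsSpherical A) (hK : cs.IsSpherical K)
    (hc : cs.SetsCommute A K) : cs.IsSpherical (A ∪ K) := by
  have hle : cs.specialSubgroup A ≤ Subgroup.centralizer (cs.specialSubgroup K) := by
    rw [specialSubgroup, specialSubgroup, Subgroup.closure_le, Subgroup.centralizer_closure]
    rintro _ ⟨a, ha, rfl⟩ _ ⟨k, hk, rfl⟩
    exact (hc a ha k hk).eq.symm
  have comm : ∀ x y, Commute ((cs.specialSubgroup A).subtype x)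
      ((cs.specialSubgroup K).subtype y) :=
    fun x y => (Subgroup.mem_centralizer_iff.1 (hle x.2) y y.2).symm
  have hrange : cs.specialSubgroup (A ∪ K) = (MonoidHom.noncommCoprod _ _ comm).range := by
    rw [MonoidHom.noncommCoprod_range, Subgroup.range_subtype, Subgroup.range_subtype,
      specialSubgroup, Set.image_union, Subgroup.closure_union]
    rfl
  have : Finite (cs.specialSubgroup A × cs.specialSubgroup K) := @Finite.instProd _ _ hA hK
  rw [IsSpherical, hrange]
  exact Finite.of_surjective _ (MonoidHom.rangeRestrict_surjective _)

theorem MinimalNonspherical.subset_of_subset_union {A K U : Set B}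
    (hm : cs.MinimalNonspherical A) (hc : cs.SetsCommute A K) (hK : cs.IsSpherical K)
    (hU : U ⊆ A ∪ K) (hns : ¬ cs.IsSpherical U) : A ⊆ U := by
  have hUA : ¬ cs.IsSpherical (U ∩ A) := by
    intro hsph
    have hUK : U ∩ K ⊆ K := Set.inter_subset_right
    refine hns ((hsph.union (hK.mono hUK) (hc.mono Set.inter_subset_right hUK)).mono
      fun x hx => ?_)
    rcases hU hx with h | h
    exacts [Or.inl ⟨hx, h⟩, Or.inr ⟨hx, h⟩]
  by_contra hAU
  exact hUA (hm.2 _ (Set.inter_subset_right.ssubset_of_not_subset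
    fun h => hAU (h.trans Set.inter_subset_left)))

theorem IsWidePre.not_isSpherical {SS T : Set B} (h : cs.IsWidePre SS T) :
    ¬ cs.IsSpherical T := by
  obtain ⟨-, A, K, rfl, -, -, ⟨hA, -⟩ | ⟨⟨-, ⟨hA, -⟩, -⟩, -⟩⟩ := h <;>
    exact not_isSpherical_mono hA Set.subset_union_left

theorem IsSlabPre.not_isSpherical {SS T : Set B} (h : cs.IsSlabPre SS T) :
    ¬ cs.IsSpherical T := by
  obtain ⟨-, A, K, rfl, -, -, ⟨hA, -⟩, -⟩ := h
  exact not_isSpherical_mono hA Set.subset_union_left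

theorem IsWidePre.of_subset {SS SS' T : Set B} (h : cs.IsWidePre SS T) (hT : T ⊆ SS') :
    cs.IsWidePre SS' T :=
  ⟨hT, h.2⟩

theorem exists_maximal_superset [Finite B] {P : Set B → Prop} {Z : Set B} (hZ : P Z) :
    ∃ Z', (P Z' ∧ ∀ T, P T → Z' ⊆ T → Z' = T) ∧ Z ⊆ Z' := by
  obtain ⟨Z', hZZ', hmax⟩ := (Set.toFinite {T | P T}).exists_le_maximal hZ
  exact ⟨Z', ⟨hmax.1, fun T hT h => h.antisymm (hmax.2 hT h)⟩, hZZ'⟩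

theorem exists_wide_superset [Finite B] {SS Z : Set B} (h : cs.IsWidePre SS Z) :
    ∃ Z' ∈ cs.wide SS, Z ⊆ Z' :=
  exists_maximal_superset h

theorem exists_slab_superset [Finite B] {SS Z : Set B} (h : cs.IsSlabPre SS Z) :
    ∃ Z' ∈ cs.slab SS, Z ⊆ Z' :=
  exists_maximal_superset h

theorem self_mem_wide {T : Set B} (h : cs.IsWidePre T T) : T ∈ cs.wide T :=
  ⟨h, fun _ hT' hsub => hsub.antisymm hT'.1⟩

/-- Two distinct slabs meeting in a nonspherical set share their minimal nonspherical factor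
`A`, and their union `A × (K₁ ∪ K₂)` is wide-type: were `K₁ ∪ K₂` spherical, the union would
be a larger slab. -/
theorem isWidePre_union_of_mem_slab {SS X Y : Set B} (hX : X ∈ cs.slab SS)
    (hY : Y ∈ cs.slab SS) (hne : X ≠ Y) (hns : ¬ cs.IsSpherical (X ∩ Y)) :
    cs.IsWidePre (X ∪ Y) (X ∪ Y) := by
  obtain ⟨⟨hXS, A₁, K₁, rfl, hd₁, hc₁, hm₁, hn₁, hs₁, hnw₁⟩, hmaxX⟩ := hX
  obtain ⟨⟨hYS, A₂, K₂, rfl, hd₂, hc₂, hm₂, -, hs₂, -⟩, hmaxY⟩ := hY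
  have hA₁ : A₁ ⊆ (A₁ ∪ K₁) ∩ (A₂ ∪ K₂) :=
    hm₁.subset_of_subset_union hc₁ hs₁ Set.inter_subset_left hns
  have hA₂ : A₂ ⊆ (A₁ ∪ K₁) ∩ (A₂ ∪ K₂) :=
    hm₂.subset_of_subset_union hc₂ hs₂ Set.inter_subset_right hns
  obtain rfl : A₁ = A₂ :=
    (hm₂.subset_of_subset_union hc₂ hs₂ (hA₁.trans Set.inter_subset_right) hm₁.1).antisymm'
      (hm₁.subset_of_subset_union hc₁ hs₁ (hA₂.trans Set.inter_subset_left) hm₂.1)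
  have hdecomp : A₁ ∪ K₁ ∪ (A₁ ∪ K₂) = A₁ ∪ (K₁ ∪ K₂) := by
    ext; simp only [Set.mem_union]; tauto
  have hdisj : Disjoint A₁ (K₁ ∪ K₂) := Set.disjoint_union_right.2 ⟨hd₁, hd₂⟩
  have hcomm : cs.SetsCommute A₁ (K₁ ∪ K₂) := by
    rintro a ha k (hk | hk)
    exacts [hc₁ a ha k hk, hc₂ a ha k hk]
  refine ⟨subset_rfl, A₁, K₁ ∪ K₂, hdecomp, hdisj, hcomm, Or.inl ⟨hm₁.1, fun hsK => hne ?_⟩⟩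
  have hunion : cs.IsSlabPre SS (A₁ ∪ K₁ ∪ (A₁ ∪ K₂)) :=
    ⟨Set.union_subset hXS hYS, A₁, K₁ ∪ K₂, hdecomp, hdisj, hcomm, hm₁,
      hn₁.mono Set.subset_union_left, hsK,
      fun ⟨T', hT', hsub⟩ => hnw₁ ⟨T', hT', Set.subset_union_left.trans hsub⟩⟩
  have hYX := (hmaxX _ hunion Set.subset_union_left).symm ▸ Set.subset_union_right
  exact (hmaxY _ ⟨hXS, A₁, K₁, rfl, hd₁, hc₁, hm₁, hn₁, hs₁, hnw₁⟩ hYX).symm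

theorem exists_wide_superset_of_subset [Finite B] {T S X : Set B} (hTS : T ⊆ S)
    (h : ∃ T' ∈ cs.wide T, X ⊆ T') : ∃ T' ∈ cs.wide S, X ⊆ T' := by
  obtain ⟨T', ⟨hT', -⟩, hXT'⟩ := h
  obtain ⟨T'', hT'', hsub⟩ := exists_wide_superset (hT'.of_subset (hT'.1.trans hTS))
  exact ⟨T'', hT'', hXT'.trans hsub⟩

theorem IsSlabPre.enlarge {T S X : Set B} (h : cs.IsSlabPre T X) (hTS : T ⊆ S)
    (hw : ¬ ∃ T' ∈ cs.wide S, X ⊆ T') : cs.IsSlabPre S X :=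
  let ⟨hXT, A, K, hX, hd, hc, hm, hn, hs, _⟩ := h
  ⟨hXT.trans hTS, A, K, hX, hd, hc, hm, hn, hs, hw⟩

theorem IsSlabPre.restrict [Finite B] {T S X : Set B} (h : cs.IsSlabPre S X) (hXT : X ⊆ T)
    (hTS : T ⊆ S) : cs.IsSlabPre T X :=
  let ⟨_, A, K, hX, hd, hc, hm, hn, hs, hw⟩ := h
  ⟨hXT, A, K, hX, hd, hc, hm, hn, hs, fun h' => hw (exists_wide_superset_of_subset hTS h')⟩

theorem subset_lambdaClass {L : Set (Set B)} {T T' : Set B} (hT' : T' ∈ L)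
    (h : Relation.EqvGen (cs.lambdaRel L) T T') : T' ⊆ cs.lambdaClass L T :=
  Set.subset_sUnion_of_mem ⟨hT', h⟩

theorem self_subset_lambdaClass {L : Set (Set B)} {T : Set B} (hT : T ∈ L) :
    T ⊆ cs.lambdaClass L T :=
  subset_lambdaClass hT (.refl T)

theorem lambdaClass_eq_of_eqvGen {L : Set (Set B)} {T T' : Set B}
    (h : Relation.EqvGen (cs.lambdaRel L) T T') : cs.lambdaClass L T = cs.lambdaClass L T' := by
  ext x
  constructor <;> rintro ⟨Z, ⟨hZ, hZrel⟩, hx⟩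
  exacts [⟨Z, ⟨hZ, .trans _ _ _ (.symm _ _ h) hZrel⟩, hx⟩, ⟨Z, ⟨hZ, .trans _ _ _ h hZrel⟩, hx⟩]

/-- Enlarging every member of an `≡`-class keeps nonspherical intersections nonspherical, so
the enlarged sets form a chain again. -/
theorem exists_lambdaClass_subset_lambdaClass {L L' : Set (Set B)} {T₀ : Set B} (hT₀ : T₀ ∈ L)
    (hcover : ∀ X ∈ L, Relation.EqvGen (cs.lambdaRel L) T₀ X → ∃ Y ∈ L', X ⊆ Y) :
    ∃ Y ∈ L', T₀ ⊆ Y ∧ cs.lambdaClass L T₀ ⊆ cs.lambdaClass L' Y := by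
  choose! f hfL hf using hcover
  refine ⟨f T₀, hfL T₀ hT₀ (.refl _), hf T₀ hT₀ (.refl _), ?_⟩
  rintro x ⟨X, ⟨hX, hT₀X⟩, hx⟩
  have hrel : Relation.EqvGen (cs.lambdaRel L') (f T₀) (f X) := by
    refine hT₀X.map_of_component f fun a b ha ⟨haL, hbL, hab⟩ => ?_
    have hb := Relation.EqvGen.trans _ _ _ ha (.rel _ _ ⟨haL, hbL, hab⟩)
    exact ⟨hfL a haL ha, hfL b hbL hb,
      not_isSpherical_mono hab (Set.inter_subset_inter (hf a haL ha) (hf b hbL hb))⟩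
  exact subset_lambdaClass (hfL X hX hT₀X) hrel (hf X hX hT₀X hx)

theorem subset_of_mem_lambdaSet {SS T : Set B} {i : ℕ} (h : T ∈ cs.lambdaSet SS i) :
    T ⊆ SS := by
  induction i generalizing T with
  | zero => rcases h with ⟨⟨h, -⟩, -⟩ | ⟨⟨h, -⟩, -⟩ <;> exact h
  | succ i ih =>
    obtain ⟨T₀, -, rfl⟩ := h
    exact Set.sUnion_subset fun X hX => ih hX.1

theorem not_isSpherical_of_mem_lambdaSet {SS T : Set B} {i : ℕ}
    (h : T ∈ cs.lambdaSet SS i) : ¬ cs.IsSpherical T := by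
  induction i generalizing T with
  | zero => rcases h with ⟨h, -⟩ | ⟨h, -⟩; exacts [h.not_isSpherical, h.not_isSpherical]
  | succ i ih =>
    obtain ⟨T₀, hT₀, rfl⟩ := h
    exact not_isSpherical_mono (ih hT₀) (self_subset_lambdaClass hT₀)

theorem exists_superset_mem_lambdaSet_of_le {SS T : Set B} {i j : ℕ} (hij : i ≤ j)
    (h : T ∈ cs.lambdaSet SS i) : ∃ Y ∈ cs.lambdaSet SS j, T ⊆ Y := by
  induction hij with
  | refl => exact ⟨T, h, subset_rfl⟩
  | step _ ih =>
    obtain ⟨Y, hY, hTY⟩ := ih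
    exact ⟨_, ⟨Y, hY, rfl⟩, hTY.trans (self_subset_lambdaClass hY)⟩

theorem exists_superset_mem_lambdaSet_zero_of_subset [Finite B] {T S Y : Set B} (hTS : T ⊆ S)
    (hY : Y ∈ cs.lambdaSet T 0) : ∃ Y' ∈ cs.lambdaSet S 0, Y ⊆ Y' := by
  rcases hY with hwide | ⟨hpre, -⟩
  · obtain ⟨Y', hY', hsub⟩ := exists_wide_superset_of_subset hTS ⟨Y, hwide, subset_rfl⟩
    exact ⟨Y', Or.inl hY', hsub⟩
  · by_cases hw : ∃ T' ∈ cs.wide S, Y ⊆ T'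
    · obtain ⟨T', hT', hsub⟩ := hw
      exact ⟨T', Or.inl hT', hsub⟩
    · obtain ⟨Y', hY', hsub⟩ := exists_slab_superset (hpre.enlarge hTS hw)
      exact ⟨Y', Or.inr hY', hsub⟩

theorem exists_superset_mem_lambdaSet_of_subset [Finite B] {T S Y : Set B} (hTS : T ⊆ S)
    {i : ℕ} (hY : Y ∈ cs.lambdaSet T i) : ∃ Y' ∈ cs.lambdaSet S i, Y ⊆ Y' := by
  induction i generalizing Y with
  | zero => exact exists_superset_mem_lambdaSet_zero_of_subset hTS hY
  | succ i ih =>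
    obtain ⟨T₀, hT₀, rfl⟩ := hY
    obtain ⟨Y, hY, -, hsub⟩ :=
      exists_lambdaClass_subset_lambdaClass (cs := cs) hT₀ fun X hX _ => ih hX
    exact ⟨_, ⟨Y, hY, rfl⟩, hsub⟩

theorem mem_lambdaSet_zero_of_subset [Finite B] {T S X : Set B}
    (hX : X ∈ cs.lambdaSet S 0) (hXT : X ⊆ T) (hTS : T ⊆ S) : X ∈ cs.lambdaSet T 0 := by
  rcases hX with ⟨hpre, hmax⟩ | ⟨hpre, hmax⟩
  · exact Or.inl ⟨hpre.of_subset hXT,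
      fun X' hX' hsub => hmax X' (hX'.of_subset (hX'.1.trans hTS)) hsub⟩
  · have hw : ¬ ∃ T' ∈ cs.wide S, X ⊆ T' := by
      obtain ⟨-, _, _, -, -, -, -, -, -, hw⟩ := hpre
      exact hw
    exact Or.inr ⟨hpre.restrict hXT hTS, fun X' hX' hsub => hmax X'
      (hX'.enlarge hTS fun ⟨T', hT', h⟩ => hw ⟨T', hT', hsub.trans h⟩) hsub⟩

theorem mem_lambdaSet_of_subset [Finite B] {T S X : Set B} {i : ℕ}
    (hX : X ∈ cs.lambdaSet S i) (hXT : X ⊆ T) (hTS : T ⊆ S) : X ∈ cs.lambdaSet T i := by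
  induction i generalizing X with
  | zero => exact mem_lambdaSet_zero_of_subset hX hXT hTS
  | succ i ih =>
    obtain ⟨X₀, hX₀, rfl⟩ := hX
    have hmemT : ∀ Z ∈ cs.lambdaSet S i, Relation.EqvGen (cs.lambdaRel (cs.lambdaSet S i)) X₀ Z →
        Z ∈ cs.lambdaSet T i :=
      fun Z hZ hZrel => ih hZ ((subset_lambdaClass hZ hZrel).trans hXT)
    have hX₀T := hmemT X₀ hX₀ (.refl _)
    refine ⟨X₀, hX₀T, (Set.sUnion_subset fun Z hZ => ?_).antisymm ?_⟩
    · obtain ⟨hZ, hZrel⟩ := hZ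
      refine subset_lambdaClass (hmemT Z hZ hZrel) ?_
      refine hZrel.map_of_component id fun a b ha ⟨haL, hbL, hab⟩ => ?_
      exact ⟨hmemT a haL ha, hmemT b hbL (.trans _ _ _ ha (.rel _ _ ⟨haL, hbL, hab⟩)), hab⟩
    · obtain ⟨Y, hY, hX₀Y, hsub⟩ := exists_lambdaClass_subset_lambdaClass (cs := cs) hX₀T
        fun Z hZ _ => exists_superset_mem_lambdaSet_of_subset hTS hZ
      have hrel : cs.lambdaRel (cs.lambdaSet S i) X₀ Y :=
        ⟨hX₀, hY, by rw [Set.inter_eq_left.2 hX₀Y]; exact not_isSpherical_of_mem_lambdaSet hX₀⟩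
      exact hsub.trans (lambdaClass_eq_of_eqvGen (.rel _ _ hrel)).symm.subset

/-- A class without a wide subset consists of slabs only; two distinct slabs in it would meet in
a nonspherical set, and `isWidePre_union_of_mem_slab` would produce a wide subset. -/
theorem exists_isWidePre_or_mem_slab_of_mem_lambdaSet {SS U : Set B} {i : ℕ}
    (h : U ∈ cs.lambdaSet SS i) : (∃ Z, cs.IsWidePre U Z) ∨ U ∈ cs.slab SS := by
  induction i generalizing U with
  | zero =>
    rcases h with ⟨hpre, -⟩ | hslab
    exacts [Or.inl ⟨U, hpre.of_subset subset_rfl⟩, Or.inr hslab]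
  | succ i ih =>
    obtain ⟨T₀, hT₀, rfl⟩ :
        ∃ T₀ ∈ cs.lambdaSet SS i, U = cs.lambdaClass (cs.lambdaSet SS i) T₀ := h
    refine or_iff_not_imp_left.2 fun hw => ?_
    have hslab : ∀ X ∈ cs.lambdaSet SS i,
        Relation.EqvGen (cs.lambdaRel (cs.lambdaSet SS i)) T₀ X → X ∈ cs.slab SS :=
      fun X hX hrel => (ih hX).resolve_left fun ⟨Z, hZ⟩ =>
        hw ⟨Z, hZ.of_subset (hZ.1.trans (subset_lambdaClass hX hrel))⟩
    have hsingle : ∀ X ∈ cs.lambdaSet SS i,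
        Relation.EqvGen (cs.lambdaRel (cs.lambdaSet SS i)) T₀ X → T₀ = X := by
      refine fun X _ hrel => eq_equivalence.eqvGen_iff.1 (hrel.map_of_component id ?_)
      rintro a b ha ⟨haL, hbL, hab⟩
      have hb := Relation.EqvGen.trans _ _ _ ha (.rel _ _ ⟨haL, hbL, hab⟩)
      by_contra hne
      have hunion := isWidePre_union_of_mem_slab (hslab a haL ha) (hslab b hbL hb) hne hab
      exact hw ⟨_, hunion.of_subset
        (Set.union_subset (subset_lambdaClass haL ha) (subset_lambdaClass hbL hb))⟩
    have hU : cs.lambdaClass (cs.lambdaSet SS i) T₀ = T₀ :=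
      (Set.sUnion_subset fun X hX => (hsingle X hX.1 hX.2).symm.subset).antisymm
        (self_subset_lambdaClass hT₀)
    rw [hU]
    exact hslab T₀ hT₀ (.refl _)

theorem exists_mem_lambdaSet_forall_not_subset {SS : Set B} {m : ℕ}
    (hmem : SS ∈ cs.lambdaSet SS (m + 2)) (hnot : SS ∉ cs.lambdaSet SS (m + 1)) :
    ∃ T ∈ cs.lambdaSet SS (m + 1), ∀ Y ∈ cs.lambdaSet SS m, ¬ T ⊆ Y := by
  obtain ⟨T₀, hT₀, hSS⟩ := hmem
  by_contra! hcover
  obtain ⟨Y, hY, -, hsub⟩ :=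
    exists_lambdaClass_subset_lambdaClass (cs := cs) hT₀ fun X hX _ => hcover X hX
  exact hnot ⟨Y, hY, (hSS.trans_subset hsub).antisymm
    (Set.sUnion_subset fun X hX => subset_of_mem_lambdaSet hX.1)⟩

theorem hypergraphIndex_eq_coe_iff {SS : Set B} {k : ℕ} :
    cs.hypergraphIndex SS = k ↔
      (cs.wide SS).Nonempty ∧ IsLeast {n | SS ∈ cs.lambdaSet SS n} k := by
  have himage : {n : ℕ∞ | ∃ h : ℕ, n = h ∧ SS ∈ cs.lambdaSet SS h} =
      Nat.cast '' {n | SS ∈ cs.lambdaSet SS n} := by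
    ext
    exact ⟨fun ⟨m, hn, hm⟩ => ⟨m, hm, hn.symm⟩, fun ⟨m, hm, hn⟩ => ⟨m, hn.symm, hm⟩⟩
  rw [hypergraphIndex, himage, Set.nonempty_iff_ne_empty]
  by_cases hw : cs.wide SS = ∅
  · simp [hw]
  · rw [if_neg hw]
    refine ⟨fun h => ⟨hw, ?_⟩, fun ⟨_, hk⟩ => (Nat.mono_cast.map_isLeast hk).csInf_eq⟩
    have hne : (Nat.cast '' {n | SS ∈ cs.lambdaSet SS n} : Set ℕ∞).Nonempty := by
      by_contra hempty
      rw [Set.not_nonempty_iff_eq_empty.1 hempty, sInf_empty] at h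
      exact ENat.top_ne_natCast k h
    obtain ⟨⟨n, hn, hnk⟩, hlb⟩ := h ▸ isLeast_csInf hne
    exact ⟨Nat.cast_inj.1 hnk ▸ hn, fun m hm => by exact_mod_cast hlb ⟨m, hm, rfl⟩⟩

theorem exists_ssubset_hypergraphIndex_eq [Finite B] {SS : Set B} {k : ℕ}
    (h : cs.hypergraphIndex SS = ((k + 1 : ℕ) : ℕ∞)) :
    ∃ T ⊂ SS, cs.hypergraphIndex T = k := by
  obtain ⟨⟨W₀, hW₀⟩, hmem, hmin⟩ := hypergraphIndex_eq_coe_iff.1 h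
  have hlt : ∀ j < k + 1, SS ∉ cs.lambdaSet SS j :=
    fun j hj hj' => absurd (hmin hj') (not_le.2 hj)
  rcases k with _ | m
  · have hself : W₀ ∈ cs.wide W₀ := self_mem_wide (hW₀.1.of_subset subset_rfl)
    refine ⟨W₀, hW₀.1.1.ssubset_of_ne ?_,
      hypergraphIndex_eq_coe_iff.2 ⟨⟨W₀, hself⟩, Or.inl hself, fun _ _ => Nat.zero_le _⟩⟩
    rintro rfl
    exact hlt 0 Nat.one_pos (Or.inl hW₀)
  obtain ⟨T, hT, hnot⟩ :=
    exists_mem_lambdaSet_forall_not_subset hmem (hlt (m + 1) (Nat.lt_succ_self _))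
  have hTSS : T ⊂ SS := (subset_of_mem_lambdaSet hT).ssubset_of_ne fun hTeq =>
    hlt (m + 1) (Nat.lt_succ_self _) (hTeq ▸ hT)
  refine ⟨T, hTSS, hypergraphIndex_eq_coe_iff.2
    ⟨?_, mem_lambdaSet_of_subset hT subset_rfl hTSS.subset, fun j hj => ?_⟩⟩
  · rcases exists_isWidePre_or_mem_slab_of_mem_lambdaSet hT with ⟨Z, hZ⟩ | hslab
    · obtain ⟨Z', hZ', -⟩ := exists_wide_superset hZ
      exact ⟨Z', hZ'⟩
    · obtain ⟨Y, hY, hTY⟩ := exists_superset_mem_lambdaSet_of_le (Nat.zero_le m)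
        (Or.inr hslab : T ∈ cs.lambdaSet SS 0)
      exact absurd hTY (hnot Y hY)
  · by_contra! hjm
    obtain ⟨Y, hY, hTY⟩ := exists_superset_mem_lambdaSet_of_subset hTSS.subset hj
    obtain ⟨Y', hY', hYY'⟩ := exists_superset_mem_lambdaSet_of_le (Nat.lt_succ_iff.1 hjm) hY
    exact hnot Y' hY' (hTY.trans hYY')

end CoxeterSystem

theorem exists_chain_of_forall_exists {α : Type*} (r : α → α → Prop) (P : α → ℕ → Prop)
    (step : ∀ x k, P x (k + 1) → ∃ y, r y x ∧ P y k) {x₀ : α} {n : ℕ} (h₀ : P x₀ n) :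
    ∃ c : ℕ → α, c 0 = x₀ ∧ (∀ i < n, r (c (i + 1)) (c i)) ∧ ∀ i ≤ n, P (c i) (n - i) := by
  have : Nonempty α := ⟨x₀⟩
  choose! g hg using step
  let c : ℕ → α := fun i => Nat.rec x₀ (fun i y => g y (n - (i + 1))) i
  have hstep : ∀ i < n, P (c i) (n - i) → r (c (i + 1)) (c i) ∧ P (c (i + 1)) (n - (i + 1)) :=
    fun i hi hP => hg (c i) (n - (i + 1)) (by rwa [show n - (i + 1) + 1 = n - i by omega])
  have hP : ∀ i ≤ n, P (c i) (n - i) := by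
    intro i hi
    induction i with
    | zero => exact h₀
    | succ i ih => exact (hstep i hi (ih (by omega))).2
  exact ⟨c, rfl, fun i hi => (hstep i hi (hP i hi.le)).1, hP⟩

theorem exists_chain_of_hypergraphIndex
    [Finite B] (cs : CoxeterSystem M W) (h : ℕ) (hpos : 1 ≤ h)
    (hidx : cs.hypergraphIndex Set.univ = (h : ℕ∞)) :
    (∃ T : Set B, T ⊂ Set.univ ∧ cs.hypergraphIndex T = ((h - 1 : ℕ) : ℕ∞)) ∧
    ∃ c : ℕ → Set B, c 0 = Set.univ ∧ (∀ i < h, c (i + 1) ⊂ c i) ∧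
      ∀ i ≤ h, cs.hypergraphIndex (c i) = ((h - i : ℕ) : ℕ∞) := by
  have step : ∀ (X : Set B) (k : ℕ), cs.hypergraphIndex X = ((k + 1 : ℕ) : ℕ∞) →
      ∃ Y, Y ⊂ X ∧ cs.hypergraphIndex Y = k :=
    fun _ _ hk => cs.exists_ssubset_hypergraphIndex_eq hk
  exact ⟨step _ _ (by rwa [Nat.sub_add_cancel hpos]),
    exists_chain_of_forall_exists (· ⊂ ·) (fun X k => cs.hypergraphIndex X = k) step hidx⟩
end
end

section
/- Let (W,S) be a Coxeter system whose Dynkin diagram Δ is a tree (more generally a forest), and suppose: Λ₀(S) is nonempty, S ∉ Λ₀(S), and there exist two distinct vertices s, t ∈ S such that deleting s (respectively t) from Δ leaves at least two nonspherical components. Then the hypergraph index of (W,S) equals 1. -/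
open scoped Classical in
noncomputable section

variable {B W : Type*} [Group W] {M : CoxeterMatrix B}

/-- The Dynkin diagram of a Coxeter matrix: vertices are the generators, with an
edge between `u ≠ v` whenever `M u v ≠ 2` (labels `≥ 3` or `∞`). -/
def CoxeterMatrix.dynkinGraph (M : CoxeterMatrix B) : SimpleGraph B where
  Adj u v := u ≠ v ∧ M u v ≠ 2
  symm := ⟨by
    intro u v h
    exact ⟨h.1.symm, by rw [M.symmetric]; exact h.2⟩⟩
  loopless := ⟨fun u h => h.1 rfl⟩

/-- Deleting the vertex `s` from the Dynkin diagram leaves at least two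
nonspherical connected components. -/
def HasTwoNonsphericalComponents (cs : CoxeterSystem M W) (s : B) : Prop :=
  ∃ c₁ c₂ : (M.dynkinGraph.induce {v : B | v ≠ s}).ConnectedComponent,
    c₁ ≠ c₂ ∧ ¬ cs.IsSpherical (Subtype.val '' c₁.supp) ∧
      ¬ cs.IsSpherical (Subtype.val '' c₂.supp)

/-!
STATEMENT 17: If the Dynkin diagram is a forest, `Λ₀(S)` is nonempty,
`S ∉ Λ₀(S)`, and there are two distinct vertices `s ≠ t` whose deletion each
leaves at least two nonspherical components, then the hypergraph index is `1`.
-/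

/-
Deleting `s` from the Dynkin diagram splits `S ∖ {s}` into its components, which pairwise
commute; one nonspherical component against the union of the others exhibits `S ∖ {s}` as a
product of two nonspherical factors, and it is a maximal one because `S` itself is not wide.
So `S ∖ {s}` and `S ∖ {t}` are wide. Their intersection `S ∖ {s, t}` contains whichever
nonspherical component of the diagram minus `s` avoids `t`, hence is nonspherical, and their
union is `S`; thus `S ∈ Λ₁(S)`, while `S ∉ Λ₀(S)`.
-/

namespace SimpleGraph.ConnectedComponent

variable {V : Type*} {G : SimpleGraph V} {S : Set V}

lemma mem_image_val_supp_of_adj {c : (G.induce S).ConnectedComponent} {u v : V}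
    (hu : u ∈ Subtype.val '' c.supp) (hv : v ∈ S) (hadj : G.Adj u v) :
    v ∈ Subtype.val '' c.supp := by
  obtain ⟨u, hu, rfl⟩ := hu
  exact ⟨⟨v, hv⟩, c.mem_supp_of_adj_mem_supp hu hadj, rfl⟩

lemma disjoint_image_val_supp {c c' : (G.induce S).ConnectedComponent} (h : c ≠ c') :
    Disjoint (Subtype.val '' c.supp) (Subtype.val '' c'.supp) :=
  (Set.disjoint_image_iff Subtype.val_injective).2
    ((G.induce S).pairwise_disjoint_supp_connectedComponent h)

end SimpleGraph.ConnectedComponent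

namespace CoxeterSystem

variable (cs : CoxeterSystem M W)

lemma commute_simple_of_eq_two {i i' : B} (h : M i i' = 2) :
    Commute (cs.simple i) (cs.simple i') := by
  have hinv : cs.simple i * cs.simple i' = (cs.simple i * cs.simple i')⁻¹ :=
    eq_inv_of_mul_eq_one_left (by simpa [h, pow_two] using cs.simple_mul_simple_pow i i')
  rw [Commute, SemiconjBy, hinv, mul_inv_rev, inv_simple, inv_simple]

lemma setsCommute_of_forall_not_adj {A K : Set B}
    (h : ∀ a ∈ A, ∀ k ∈ K, ¬ M.dynkinGraph.Adj a k) : cs.SetsCommute A K := by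
  intro a ha k hk
  by_cases hak : a = k
  · exact hak ▸ Commute.refl _
  · exact cs.commute_simple_of_eq_two (not_not.1 fun hM => h a ha k hk ⟨hak, hM⟩)

lemma setsCommute_component_diff {S : Set B} (c : (M.dynkinGraph.induce S).ConnectedComponent) :
    cs.SetsCommute (Subtype.val '' c.supp) (S \ Subtype.val '' c.supp) :=
  cs.setsCommute_of_forall_not_adj fun _ ha _ hk hadj =>
    hk.2 (c.mem_image_val_supp_of_adj ha hk.1 hadj)

variable {cs}

lemma IsSpherical.subset {A K : Set B} (hK : cs.IsSpherical K) (h : A ⊆ K) :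
    cs.IsSpherical A :=
  have hle : cs.specialSubgroup A ≤ cs.specialSubgroup K :=
    Subgroup.closure_mono (Set.image_mono h)
  have : Finite (cs.specialSubgroup K) := hK
  Finite.of_injective (Subgroup.inclusion hle) (Subgroup.inclusion_injective hle)

lemma not_isWidePre_of_notMem_lambdaSet_zero {SS : Set B} (h : SS ∉ cs.lambdaSet SS 0) :
    ¬ cs.IsWidePre SS SS :=
  fun hSS => h (Or.inl ⟨hSS, fun _ hT' hsub => hsub.antisymm hT'.1⟩)

lemma compl_singleton_mem_wide {s : B} (hs : cs.IsWidePre Set.univ {s}ᶜ)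
    (huniv : ¬ cs.IsWidePre Set.univ Set.univ) : {s}ᶜ ∈ cs.wide Set.univ := by
  refine ⟨hs, fun T hT hsub => ?_⟩
  by_cases hsT : s ∈ T
  · refine absurd ?_ huniv
    convert hT
    exact (Set.eq_univ_of_forall fun x => by_cases (fun hx : x = s => hx ▸ hsT) (@hsub x)).symm
  · exact hsub.antisymm (Set.subset_compl_singleton_iff.2 hsT)

lemma univ_mem_lambdaSet_succ {i : ℕ} {T T' : Set B} (hT : T ∈ cs.lambdaSet Set.univ i)
    (hT' : T' ∈ cs.lambdaSet Set.univ i) (hinter : ¬ cs.IsSpherical (T ∩ T'))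
    (hunion : T ∪ T' = Set.univ) : Set.univ ∈ cs.lambdaSet Set.univ (i + 1) := by
  refine ⟨T, hT, (Set.eq_univ_of_univ_subset (hunion.symm.subset.trans ?_)).symm⟩
  exact Set.union_subset (Set.subset_sUnion_of_mem ⟨hT, .refl _⟩)
    (Set.subset_sUnion_of_mem ⟨hT', .rel _ _ ⟨hT, hT', hinter⟩⟩)

lemma hypergraphIndex_eq_one {SS : Set B} (hwide : (cs.wide SS).Nonempty)
    (h0 : SS ∉ cs.lambdaSet SS 0) (h1 : SS ∈ cs.lambdaSet SS 1) :
    cs.hypergraphIndex SS = 1 := by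
  rw [hypergraphIndex, if_neg hwide.ne_empty]
  refine le_antisymm (sInf_le ⟨1, Nat.cast_one.symm, h1⟩) (le_sInf ?_)
  rintro _ ⟨h, rfl, hh⟩
  obtain _ | h := h
  · exact absurd hh h0
  · exact_mod_cast Nat.succ_pos h

end CoxeterSystem

namespace HasTwoNonsphericalComponents

variable {cs : CoxeterSystem M W} {s : B}

lemma isWidePre_compl_singleton (hs : HasTwoNonsphericalComponents cs s) :
    cs.IsWidePre Set.univ {s}ᶜ := by
  obtain ⟨c₁, c₂, hc, hns₁, hns₂⟩ := hs
  refine ⟨Set.subset_univ _, Subtype.val '' c₁.supp, {s}ᶜ \ Subtype.val '' c₁.supp,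
    (Set.union_sdiff_cancel (Subtype.coe_image_subset _ _)).symm, Set.disjoint_sdiff_right,
    cs.setsCommute_component_diff c₁, Or.inl ⟨hns₁, fun hK => hns₂ (hK.subset ?_)⟩⟩
  exact Set.subset_sdiff.2 ⟨Subtype.coe_image_subset _ _,
    (SimpleGraph.ConnectedComponent.disjoint_image_val_supp hc).symm⟩

lemma not_isSpherical_compl_inter (hs : HasTwoNonsphericalComponents cs s) (t : B) :
    ¬ cs.IsSpherical ({s}ᶜ ∩ {t}ᶜ) := by
  obtain ⟨c₁, c₂, hc, hns₁, hns₂⟩ := hs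
  have of_avoiding : ∀ c : (M.dynkinGraph.induce {v : B | v ≠ s}).ConnectedComponent,
      ¬ cs.IsSpherical (Subtype.val '' c.supp) → t ∉ Subtype.val '' c.supp →
        ¬ cs.IsSpherical ({s}ᶜ ∩ {t}ᶜ) := fun c hns ht hsph =>
    hns (hsph.subset (Set.subset_inter (Subtype.coe_image_subset _ _)
      (Set.subset_compl_singleton_iff.2 ht)))
  by_cases ht₁ : t ∈ Subtype.val '' c₁.supp
  · exact of_avoiding c₂ hns₂
      (Set.disjoint_left.1 (SimpleGraph.ConnectedComponent.disjoint_image_val_supp hc) ht₁)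
  · exact of_avoiding c₁ hns₁ ht₁

end HasTwoNonsphericalComponents

theorem hypergraphIndex_eq_one_of_tree_general
    (cs : CoxeterSystem M W)
    (hnotin : Set.univ ∉ cs.lambdaSet Set.univ 0)
    (s t : B) (hst : s ≠ t)
    (hs : HasTwoNonsphericalComponents cs s)
    (ht : HasTwoNonsphericalComponents cs t) :
    cs.hypergraphIndex Set.univ = 1 := by
  have huniv := CoxeterSystem.not_isWidePre_of_notMem_lambdaSet_zero hnotin
  have hTs := CoxeterSystem.compl_singleton_mem_wide hs.isWidePre_compl_singleton huniv
  have hTt := CoxeterSystem.compl_singleton_mem_wide ht.isWidePre_compl_singleton huniv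
  have hunion : ({s}ᶜ ∪ {t}ᶜ : Set B) = Set.univ := by
    rw [← Set.compl_inter, Set.singleton_inter_eq_empty.2 (Set.notMem_singleton_iff.2 hst), Set.compl_empty]
  exact CoxeterSystem.hypergraphIndex_eq_one ⟨_, hTs⟩ hnotin
    (CoxeterSystem.univ_mem_lambdaSet_succ (Or.inl hTs) (Or.inl hTt)
      (hs.not_isSpherical_compl_inter t) hunion)

theorem hypergraphIndex_eq_one_of_tree
    [Finite B] (cs : CoxeterSystem M W)
    (htree : M.dynkinGraph.IsAcyclic)
    (hne : (cs.lambdaSet Set.univ 0).Nonempty)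
    (hnotin : Set.univ ∉ cs.lambdaSet Set.univ 0)
    (s t : B) (hst : s ≠ t)
    (hs : HasTwoNonsphericalComponents cs s)
    (ht : HasTwoNonsphericalComponents cs t) :
    cs.hypergraphIndex Set.univ = 1 :=
  hypergraphIndex_eq_one_of_tree_general cs hnotin s t hst hs ht
end
end
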